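/- Let a ∈ O_L with ϖ ∣ a. If x, y ∈ Λ satisfy H_m·(x, y)ᵀ ≡ (0, 0)ᵀ (mod ω_m·Λ) for every m ≥ 1, then x = y = 0. The same holds with Λ replaced by (O_L/ϖ^n O_L)[[X]] for any n ≥ 1, with a, Φ_j, ω_m replaced by their images. (This is the injectivity underlying the isomorphisms (3.2)–(3.3) of the paper, and it gives the uniqueness in Theorem 3.3.) -/

import Mathlib

/-!
Setting: `p ≥ 5` a prime, `𝕆` the ring of integers of a finite extension of `ℚ_p`
(modelled as a characteristic-zero discrete valuation ring) with uniformizer `ϖ`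
satisfying `ϖ ∣ p`, and `Λ = 𝕆⟦X⟧`.
-/

open PowerSeries

/-- `ω_m = (1+X)^{p^m} − 1`. -/
noncomputable def omegaPS (p : ℕ) (R : Type*) [CommRing R] (m : ℕ) : PowerSeries R :=
  (1 + PowerSeries.X) ^ (p ^ m) - 1

/-- `Φ_m = Σ_{i<p} (1+X)^{i·p^{m−1}}` (meaningful for `m ≥ 1`). -/
noncomputable def PhiPS (p : ℕ) (R : Type*) [CommRing R] (m : ℕ) : PowerSeries R :=
  ∑ i ∈ Finset.range p, (1 + PowerSeries.X) ^ (i * p ^ (m - 1))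

/-- The matrix `C_j = ((a, 1), (−Φ_j, 0))`. -/
noncomputable def Cmat (p : ℕ) (R : Type*) [CommRing R] (a : R) (j : ℕ) :
    Matrix (Fin 2) (Fin 2) (PowerSeries R) :=
  !![PowerSeries.C (R := R) a, 1; -(PhiPS p R j), 0]

/-- `H_m = C_m · C_{m−1} ⋯ C_1` (with `H_0 = 1`). -/
noncomputable def Hmat (p : ℕ) (R : Type*) [CommRing R] (a : R) :
    ℕ → Matrix (Fin 2) (Fin 2) (PowerSeries R)
  | 0 => 1
  | m + 1 => Cmat p R a (m + 1) * Hmat p R a m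

/-!
Modulo `ϖ` the parameter `a` vanishes and, in characteristic `p`, `ω_m = X^{p^m}` and
`Φ_{m+1} = X^{(p-1)p^m}`. Then `H_{2j} = ±diag(Φ_1Φ_3⋯Φ_{2j-1}, Φ_2Φ_4⋯Φ_{2j})`, and the product
of these two entries with `ω_0` is `ω_{2j}`; so `ω_{2j} ∣ H_{2j} v` gives `Φ_{2j} ∣ v₀` and
`Φ_{2j-1} ∣ v₁`, whence `v ≡ 0 mod ϖ`. Since `ω_m` stays nonzero modulo `ϖ`, a solution modulo
`(ω_m, ϖ^{k+1})` of the form `ϖ w` gives a solution `w` modulo `(ω_m, ϖ^k)`; by induction every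
solution modulo `(ω_m, ϖ^k)` is divisible by `ϖ^k`. This proves the statement over `𝕆/ϖ^n`, and
over `𝕆` it follows because `𝕆` is `ϖ`-adically separated.
-/

section Generic
variable (p : ℕ) {R : Type*} [CommRing R]

lemma omegaPS_succ (m : ℕ) : omegaPS p R (m + 1) = PhiPS p R (m + 1) * omegaPS p R m := by
  rw [omegaPS, omegaPS, PhiPS, Nat.add_sub_cancel, pow_succ, pow_mul]
  simp_rw [mul_comm _ (p ^ m), pow_mul]
  exact (geom_sum_mul _ p).symm

lemma omegaPS_two_mul (j : ℕ) : omegaPS p R (2 * j) =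
    (∏ t ∈ Finset.range j, PhiPS p R (2 * t + 1)) *
      (∏ t ∈ Finset.range j, PhiPS p R (2 * t + 2)) * omegaPS p R 0 := by
  induction j with
  | zero => simp
  | succ j ih =>
    rw [show 2 * (j + 1) = 2 * j + 1 + 1 by ring, omegaPS_succ, omegaPS_succ, ih,
      Finset.prod_range_succ, Finset.prod_range_succ]
    ring

lemma Hmat_zero_two_mul (j : ℕ) : Hmat p R 0 (2 * j) =
    !![(-1) ^ j * ∏ t ∈ Finset.range j, PhiPS p R (2 * t + 1), 0;
      0, (-1) ^ j * ∏ t ∈ Finset.range j, PhiPS p R (2 * t + 2)] := by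
  induction j with
  | zero => simp [Hmat, Matrix.one_fin_two]
  | succ j ih =>
    rw [show 2 * (j + 1) = 2 * j + 1 + 1 by ring, Hmat, Hmat, ih, Cmat, Cmat,
      Matrix.mul_fin_two, Matrix.mul_fin_two, Finset.prod_range_succ, Finset.prod_range_succ]
    refine Matrix.ext fun i k => ?_
    fin_cases i <;> fin_cases k <;> simp [pow_succ] <;> ring

end Generic

lemma PowerSeries.eq_zero_of_forall_X_pow_dvd {R : Type*} [CommRing R] {f : PowerSeries R}
    (h : ∀ n, X ^ n ∣ f) : f = 0 := by
  ext n
  exact X_pow_dvd_iff.mp (h (n + 1)) n (Nat.lt_succ_self n)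

section CharP
open Matrix
variable (p : ℕ) [Fact p.Prime] (F : Type*) [CommRing F] [CharP F p]

instance PowerSeries.charP : CharP (PowerSeries F) p :=
  charP_of_injective_ringHom (C_injective (R := F)) p

lemma omegaPS_eq_X_pow (m : ℕ) : omegaPS p F m = X ^ (p ^ m) := by
  rw [omegaPS, add_pow_char_pow, one_pow, add_sub_cancel_left]

lemma PhiPS_succ_eq_X_pow [IsDomain F] (m : ℕ) : PhiPS p F (m + 1) = X ^ ((p - 1) * p ^ m) := by
  have hp : p.Prime := Fact.out
  have h := omegaPS_succ p (R := F) m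
  have hexp : p ^ (m + 1) = (p - 1) * p ^ m + p ^ m := by
    rw [Nat.sub_one_mul, pow_succ', Nat.sub_add_cancel (Nat.le_mul_of_pos_left _ hp.pos)]
  rw [omegaPS_eq_X_pow, omegaPS_eq_X_pow, hexp, pow_add] at h
  exact (mul_right_cancel₀ (pow_ne_zero _ X_ne_zero) h).symm

variable [IsDomain F]

lemma Hmat_zero_two_mul_mulVec_dvd (j : ℕ) (v : Fin 2 → PowerSeries F)
    (h : ∀ i, omegaPS p F (2 * j) ∣ (Hmat p F 0 (2 * j) *ᵥ v) i) :
    (∏ t ∈ Finset.range j, PhiPS p F (2 * t + 2)) ∣ v 0 ∧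
      (∏ t ∈ Finset.range j, PhiPS p F (2 * t + 1)) ∣ v 1 := by
  have hω := omegaPS_two_mul p (R := F) j
  have hPQ : (∏ t ∈ Finset.range j, PhiPS p F (2 * t + 1)) *
      (∏ t ∈ Finset.range j, PhiPS p F (2 * t + 2)) ≠ 0 := by
    intro h0
    rw [h0, zero_mul, omegaPS_eq_X_pow] at hω
    exact pow_ne_zero _ X_ne_zero hω
  have h0 := h 0
  have h1 := h 1
  rw [Hmat_zero_two_mul, hω] at h0 h1
  simp only [mulVec, dotProduct, Fin.sum_univ_two, of_apply, cons_val', cons_val_fin_one,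
    cons_val_zero, cons_val_one, zero_mul, add_zero, zero_add, mul_assoc,
    ((isUnit_neg_one).pow j).dvd_mul_left] at h0 h1
  rw [mul_left_comm] at h1
  exact ⟨dvd_of_mul_right_dvd ((mul_dvd_mul_iff_left (left_ne_zero_of_mul hPQ)).mp h0),
    dvd_of_mul_right_dvd ((mul_dvd_mul_iff_left (right_ne_zero_of_mul hPQ)).mp h1)⟩

lemma eq_zero_of_forall_Hmat_zero_mulVec_dvd (v : Fin 2 → PowerSeries F)
    (h : ∀ m, 1 ≤ m → ∀ i, omegaPS p F m ∣ (Hmat p F 0 m *ᵥ v) i) : v = 0 := by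
  have hΦ : ∀ j, X ^ ((p - 1) * p ^ (2 * j + 1)) ∣ v 0 ∧ X ^ ((p - 1) * p ^ (2 * j)) ∣ v 1 := by
    intro j
    obtain ⟨h0, h1⟩ := Hmat_zero_two_mul_mulVec_dvd p F (j + 1) v (h _ (by omega))
    rw [← PhiPS_succ_eq_X_pow, ← PhiPS_succ_eq_X_pow]
    exact ⟨(Finset.dvd_prod_of_mem _ (Finset.self_mem_range_succ j)).trans h0,
      (Finset.dvd_prod_of_mem _ (Finset.self_mem_range_succ j)).trans h1⟩
  have hp : p.Prime := Fact.out
  have hle : ∀ n k, n ≤ k → n ≤ (p - 1) * p ^ k := fun n k hnk =>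
    calc n ≤ k := hnk
      _ ≤ p ^ k := (Nat.lt_pow_self hp.one_lt).le
      _ ≤ (p - 1) * p ^ k := Nat.le_mul_of_pos_left _ (Nat.sub_pos_of_lt hp.one_lt)
  funext i
  fin_cases i <;> refine PowerSeries.eq_zero_of_forall_X_pow_dvd fun n => ?_
  · exact (pow_dvd_pow X (hle n _ (by omega))).trans (hΦ n).1
  · exact (pow_dvd_pow X (hle n _ (by omega))).trans (hΦ n).2

end CharP

section Transport
variable {R S : Type*} [CommRing R] [CommRing S] (f : R →+* S) (p : ℕ)

lemma map_omegaPS (m : ℕ) : PowerSeries.map f (omegaPS p R m) = omegaPS p S m := by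
  simp [omegaPS]

lemma map_PhiPS (m : ℕ) : PowerSeries.map f (PhiPS p R m) = PhiPS p S m := by
  simp [PhiPS]

lemma map_Cmat (a : R) (j : ℕ) : (Cmat p R a j).map (PowerSeries.map f) = Cmat p S (f a) j := by
  refine Matrix.ext fun i k => ?_
  fin_cases i <;> fin_cases k <;> simp [Cmat, map_PhiPS]

lemma map_Hmat (a : R) (m : ℕ) : (Hmat p R a m).map (PowerSeries.map f) = Hmat p S (f a) m := by
  induction m with
  | zero => simp [Hmat]
  | succ m ih => rw [Hmat, Hmat, Matrix.map_mul, ih, map_Cmat]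

end Transport

lemma PowerSeries.map_mk_span_singleton_eq_zero_iff {R : Type*} [CommRing R] {c : R}
    {f : PowerSeries R} : PowerSeries.map (Ideal.Quotient.mk (Ideal.span {c})) f = 0 ↔ C c ∣ f := by
  constructor
  · intro hf
    have hcoeff : ∀ n, c ∣ coeff n f := fun n => by
      simpa [Ideal.Quotient.eq_zero_iff_mem, Ideal.mem_span_singleton] using
        congrArg (coeff n) hf
    choose g hg using hcoeff
    exact ⟨PowerSeries.mk g, by ext n; simp [hg n]⟩
  · rintro ⟨g, rfl⟩
    rw [map_mul, map_C, Ideal.Quotient.eq_zero_iff_mem.mpr (Ideal.mem_span_singleton_self c),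
      map_zero, zero_mul]

lemma PowerSeries.eq_zero_of_forall_C_pow_dvd {R : Type*} [CommRing R] [IsDomain R] [WfDvdMonoid R]
    {ϖ : R} (hϖ : ¬IsUnit ϖ) {f : PowerSeries R} (h : ∀ k, C (ϖ ^ k) ∣ f) : f = 0 := by
  ext n
  by_contra hne
  obtain ⟨k, hk⟩ := FiniteMultiplicity.of_not_isUnit hϖ hne
  obtain ⟨g, rfl⟩ := h (k + 1)
  exact hk ⟨coeff n g, coeff_C_mul n g _⟩

lemma charP_quotient_span_singleton (p : ℕ) [Fact p.Prime] {R : Type*} [CommRing R] {ϖ : R}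
    (hϖ : ¬IsUnit ϖ) (hpϖ : ϖ ∣ (p : R)) : CharP (R ⧸ Ideal.span {ϖ}) p := by
  have : Nontrivial (R ⧸ Ideal.span {ϖ}) :=
    Ideal.Quotient.nontrivial_iff.mpr (by rwa [ne_eq, Ideal.span_singleton_eq_top])
  rw [CharP.charP_iff_prime_eq_zero Fact.out, ← map_natCast (Ideal.Quotient.mk _),
    Ideal.Quotient.eq_zero_iff_mem, Ideal.mem_span_singleton]
  exact hpϖ

section Devissage
open Matrix
variable (p : ℕ) {𝕆 : Type*} [CommRing 𝕆]

/-- `H_m v ≡ 0` modulo the ideal `(ω_m, c)` of `𝕆⟦X⟧`, for every `m ≥ 1`. -/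
def HmatVanishesMod (a c : 𝕆) (v : Fin 2 → PowerSeries 𝕆) : Prop :=
  ∀ m, 1 ≤ m → ∀ i, ∃ g h, (Hmat p 𝕆 a m *ᵥ v) i = omegaPS p 𝕆 m * g + C c * h

variable {p}

lemma HmatVanishesMod.of_dvd {a c d : 𝕆} {v : Fin 2 → PowerSeries 𝕆} (hcd : c ∣ d)
    (hv : HmatVanishesMod p a d v) : HmatVanishesMod p a c v := by
  obtain ⟨e, rfl⟩ := hcd
  intro m hm i
  obtain ⟨g, h, hgh⟩ := hv m hm i
  exact ⟨g, C e * h, by rw [hgh, map_mul]; ring⟩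

lemma HmatVanishesMod.of_forall_dvd {a : 𝕆} (c : 𝕆) {v : Fin 2 → PowerSeries 𝕆}
    (hv : ∀ m, 1 ≤ m → ∀ i, omegaPS p 𝕆 m ∣ (Hmat p 𝕆 a m *ᵥ v) i) :
    HmatVanishesMod p a c v := fun m hm i => by
  obtain ⟨g, hg⟩ := hv m hm i
  exact ⟨g, 0, by rw [hg, mul_zero, add_zero]⟩

lemma HmatVanishesMod.of_map_mk {a c : 𝕆} {v : Fin 2 → PowerSeries 𝕆}
    (hv : ∀ m, 1 ≤ m → ∀ i, omegaPS p (𝕆 ⧸ Ideal.span {c}) m ∣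
      (Hmat p _ (Ideal.Quotient.mk _ a) m *ᵥ (PowerSeries.map (Ideal.Quotient.mk _) ∘ v)) i) :
    HmatVanishesMod p a c v := by
  intro m hm i
  obtain ⟨g, hg⟩ := hv m hm i
  obtain ⟨g, rfl⟩ := PowerSeries.map_surjective _ Ideal.Quotient.mk_surjective g
  obtain ⟨h, hh⟩ : C c ∣ (Hmat p 𝕆 a m *ᵥ v) i - omegaPS p 𝕆 m * g :=
    PowerSeries.map_mk_span_singleton_eq_zero_iff.mp <| by
      rw [map_sub, RingHom.map_mulVec, map_Hmat, map_mul, map_omegaPS, hg, sub_self]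
  exact ⟨g, h, by rw [← hh]; ring⟩

variable [Fact p.Prime] {ϖ : 𝕆} (hϖ : Prime ϖ) (hpϖ : ϖ ∣ (p : 𝕆))
include hϖ hpϖ

lemma HmatVanishesMod.C_dvd {a : 𝕆} (ha : ϖ ∣ a) {v : Fin 2 → PowerSeries 𝕆}
    (hv : HmatVanishesMod p a ϖ v) (i : Fin 2) : C ϖ ∣ v i := by
  have := Ideal.isPrime_span_singleton_of_prime hϖ
  have := charP_quotient_span_singleton p hϖ.not_isUnit hpϖ
  have hmk : ∀ {b}, ϖ ∣ b → Ideal.Quotient.mk (Ideal.span {ϖ}) b = 0 := fun hb =>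
    Ideal.Quotient.eq_zero_iff_mem.mpr (Ideal.mem_span_singleton.mpr hb)
  have hv0 : PowerSeries.map (Ideal.Quotient.mk (Ideal.span {ϖ})) ∘ v = 0 := by
    refine eq_zero_of_forall_Hmat_zero_mulVec_dvd p _ _ fun m hm j => ?_
    obtain ⟨g, h, hgh⟩ := hv m hm j
    refine ⟨PowerSeries.map (Ideal.Quotient.mk _) g, ?_⟩
    rw [← hmk ha, ← map_Hmat, ← RingHom.map_mulVec, hgh, map_add, map_mul, map_mul, map_omegaPS,
      map_C, hmk dvd_rfl, map_zero, zero_mul, add_zero]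
  exact PowerSeries.map_mk_span_singleton_eq_zero_iff.mp (congrFun hv0 i)

variable [IsDomain 𝕆]

lemma omegaPS_dvd_of_dvd_C_mul {m : ℕ} {f : PowerSeries 𝕆} (h : omegaPS p 𝕆 m ∣ C ϖ * f) :
    omegaPS p 𝕆 m ∣ f := by
  have := Ideal.isPrime_span_singleton_of_prime hϖ
  have := charP_quotient_span_singleton p hϖ.not_isUnit hpϖ
  obtain ⟨g, hg⟩ := h
  have hg0 : PowerSeries.map (Ideal.Quotient.mk (Ideal.span {ϖ})) g = 0 := by
    have := congrArg (PowerSeries.map (Ideal.Quotient.mk (Ideal.span {ϖ}))) hg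
    rw [map_mul, map_mul, map_omegaPS, omegaPS_eq_X_pow,
      PowerSeries.map_mk_span_singleton_eq_zero_iff.mpr dvd_rfl, zero_mul] at this
    exact (mul_eq_zero.mp this.symm).resolve_left (pow_ne_zero _ X_ne_zero)
  obtain ⟨g', rfl⟩ := PowerSeries.map_mk_span_singleton_eq_zero_iff.mp hg0
  refine ⟨g', mul_left_cancel₀ (C_injective.ne hϖ.ne_zero |>.trans_eq (map_zero _)) ?_⟩
  rw [hg]; ring

lemma HmatVanishesMod.of_C_smul {a c : 𝕆} {w : Fin 2 → PowerSeries 𝕆}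
    (hw : HmatVanishesMod p a (ϖ * c) (C ϖ • w)) : HmatVanishesMod p a c w := by
  intro m hm i
  obtain ⟨g, h, hgh⟩ := hw m hm i
  rw [mulVec_smul, Pi.smul_apply, smul_eq_mul] at hgh
  obtain ⟨g', hg'⟩ : omegaPS p 𝕆 m ∣ (Hmat p 𝕆 a m *ᵥ w) i - C c * h :=
    omegaPS_dvd_of_dvd_C_mul hϖ hpϖ ⟨g, by rw [mul_sub, hgh, map_mul]; ring⟩
  exact ⟨g', h, by rw [← hg']; ring⟩

lemma HmatVanishesMod.C_pow_dvd {a : 𝕆} (ha : ϖ ∣ a) (k : ℕ) {v : Fin 2 → PowerSeries 𝕆}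
    (hv : HmatVanishesMod p a (ϖ ^ k) v) (i : Fin 2) : C (ϖ ^ k) ∣ v i := by
  induction k generalizing v with
  | zero => simp
  | succ k ih =>
    rw [pow_succ'] at hv ⊢
    choose w hw using (hv.of_dvd (dvd_mul_right ϖ _)).C_dvd hϖ hpϖ ha
    have hvw : v = C ϖ • w := funext hw
    rw [hvw] at hv
    rw [hw, map_mul]
    exact mul_dvd_mul_left _ (ih (hv.of_C_smul hϖ hpϖ))

end Devissage

theorem sharp_flat_uniqueness_kernels_general
    (p : ℕ) (hp : p.Prime)
    (𝕆 : Type*) [CommRing 𝕆] [IsDomain 𝕆] [IsDiscreteValuationRing 𝕆]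
    (ϖ : 𝕆) (hϖ : Irreducible ϖ) (hpϖ : ϖ ∣ (p : 𝕆)) :
    (∀ a : 𝕆, ϖ ∣ a → ∀ x y : PowerSeries 𝕆,
      (∀ m : ℕ, 1 ≤ m → ∀ i : Fin 2,
        omegaPS p 𝕆 m ∣ (Hmat p 𝕆 a m).mulVec ![x, y] i) →
      x = 0 ∧ y = 0) ∧
    (∀ n : ℕ, 1 ≤ n → ∀ a : 𝕆, ϖ ∣ a →
      ∀ x y : PowerSeries (𝕆 ⧸ Ideal.span {ϖ ^ n}),
      (∀ m : ℕ, 1 ≤ m → ∀ i : Fin 2,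
        omegaPS p (𝕆 ⧸ Ideal.span {ϖ ^ n}) m ∣
          (Hmat p (𝕆 ⧸ Ideal.span {ϖ ^ n})
            (Ideal.Quotient.mk (Ideal.span {ϖ ^ n}) a) m).mulVec ![x, y] i) →
      x = 0 ∧ y = 0) := by
  have := Fact.mk hp
  refine ⟨fun a ha x y hxy => ?_, fun n _ a ha x y hxy => ?_⟩
  · have hdvd (k : ℕ) := (HmatVanishesMod.of_forall_dvd (ϖ ^ k) hxy).C_pow_dvd hϖ.prime hpϖ ha k
    exact ⟨PowerSeries.eq_zero_of_forall_C_pow_dvd hϖ.not_isUnit fun k => hdvd k 0,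
      PowerSeries.eq_zero_of_forall_C_pow_dvd hϖ.not_isUnit fun k => hdvd k 1⟩
  · obtain ⟨x, rfl⟩ := PowerSeries.map_surjective _ Ideal.Quotient.mk_surjective x
    obtain ⟨y, rfl⟩ := PowerSeries.map_surjective _ Ideal.Quotient.mk_surjective y
    have hv : HmatVanishesMod p a (ϖ ^ n) ![x, y] := .of_map_mk fun m hm i => by
      rw [← FinVec.map_eq]; exact hxy m hm i
    simp_rw [PowerSeries.map_mk_span_singleton_eq_zero_iff]
    exact ⟨hv.C_pow_dvd hϖ.prime hpϖ ha n 0, hv.C_pow_dvd hϖ.prime hpϖ ha n 1⟩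

/-- if `ϖ ∣ a` and `x, y ∈ Λ` satisfy
`H_m·(x,y)ᵀ ≡ (0,0)ᵀ (mod ω_m·Λ)` for every `m ≥ 1`, then `x = y = 0`; and the
same holds with `Λ` replaced by `(𝕆/ϖⁿ𝕆)⟦X⟧` for any `n ≥ 1`, with `a, Φ_j, ω_m`
replaced by their images. -/
theorem sharp_flat_uniqueness_kernels
    (p : ℕ) (hp : p.Prime) (hp5 : 5 ≤ p)
    (𝕆 : Type*) [CommRing 𝕆] [IsDomain 𝕆] [IsDiscreteValuationRing 𝕆] [CharZero 𝕆]
    (ϖ : 𝕆) (hϖ : Irreducible ϖ) (hpϖ : ϖ ∣ (p : 𝕆)) :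
    (∀ a : 𝕆, ϖ ∣ a → ∀ x y : PowerSeries 𝕆,
      (∀ m : ℕ, 1 ≤ m → ∀ i : Fin 2,
        omegaPS p 𝕆 m ∣ (Hmat p 𝕆 a m).mulVec ![x, y] i) →
      x = 0 ∧ y = 0) ∧
    (∀ n : ℕ, 1 ≤ n → ∀ a : 𝕆, ϖ ∣ a →
      ∀ x y : PowerSeries (𝕆 ⧸ Ideal.span {ϖ ^ n}),
      (∀ m : ℕ, 1 ≤ m → ∀ i : Fin 2,
        omegaPS p (𝕆 ⧸ Ideal.span {ϖ ^ n}) m ∣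
          (Hmat p (𝕆 ⧸ Ideal.span {ϖ ^ n})
            (Ideal.Quotient.mk (Ideal.span {ϖ ^ n}) a) m).mulVec ![x, y] i) →
      x = 0 ∧ y = 0) :=
  sharp_flat_uniqueness_kernels_general p hp 𝕆 ϖ hϖ hpϖ
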